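/- Let (σ_g)_{g≥1} be the integer sequence with σ₁ = 3, σ₂ = 8, σ₃ = 18 and σ_{g+3} = 8σ_{g+2} − 23σ_{g+1} + 23σ_g. Then (σ_g mod 7) is periodic of period 12, and σ_g ≡ 0 (mod 7) if and only if g ≡ 11 (mod 12). -/
import Mathlib

/-- Table of `σ g % 7` in terms of `g % 12`. -/
def tab (r : ℕ) : ℤ :=
  if r = 0 then 1 else if r = 1 then 3 else if r = 2 then 1 else if r = 3 then 4
  else if r = 4 then 1 else if r = 5 then 2 else if r = 6 then 1 else if r = 7 then 6
  else if r = 8 then 1 else if r = 9 then 5 else if r = 10 then 1 else 0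

set_option maxHeartbeats 1000000 in
/-- The signature sequence at `p = 7`: with `σ₁ = 3`, `σ₂ = 8`, `σ₃ = 18` and
`σ_{g+3} = 8σ_{g+2} - 23σ_{g+1} + 23σ_g`, the sequence `σ_g mod 7` is periodic
with period 12, and `σ_g ≡ 0 (mod 7)` iff `g ≡ 11 (mod 12)`. -/
theorem stmt15 (σ : ℕ → ℤ) (h1 : σ 1 = 3) (h2 : σ 2 = 8) (h3 : σ 3 = 18)
    (hrec : ∀ g : ℕ, 1 ≤ g →
      σ (g + 3) = 8 * σ (g + 2) - 23 * σ (g + 1) + 23 * σ g) :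
    (∀ g : ℕ, 1 ≤ g → σ (g + 12) % 7 = σ g % 7) ∧
    (∀ g : ℕ, 1 ≤ g → (σ g % 7 = 0 ↔ g % 12 = 11)) := by
  have key : ∀ g : ℕ, 1 ≤ g →
      σ g % 7 = tab (g % 12) ∧ σ (g + 1) % 7 = tab ((g + 1) % 12) ∧
      σ (g + 2) % 7 = tab ((g + 2) % 12) := by
    intro g hg
    induction g, hg using Nat.le_induction with
    | base =>
      show σ 1 % 7 = tab (1 % 12) ∧ σ 2 % 7 = tab (2 % 12) ∧ σ 3 % 7 = tab (3 % 12)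
      rw [h1, h2, h3]
      norm_num [tab]
    | succ g hg ih =>
      obtain ⟨i1, i2, i3⟩ := ih
      have heq := hrec g hg
      refine ⟨i2, i3, ?_⟩
      show σ (g + 3) % 7 = tab ((g + 3) % 12)
      have h12 : g % 12 = 0 ∨ g % 12 = 1 ∨ g % 12 = 2 ∨ g % 12 = 3 ∨ g % 12 = 4 ∨
          g % 12 = 5 ∨ g % 12 = 6 ∨ g % 12 = 7 ∨ g % 12 = 8 ∨ g % 12 = 9 ∨
          g % 12 = 10 ∨ g % 12 = 11 := by omega
      rcases h12 with hk|hk|hk|hk|hk|hk|hk|hk|hk|hk|hk|hk <;>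
        (rw [show (g + 1) % 12 = (g % 12 + 1) % 12 from by omega, hk] at i2
         rw [show (g + 2) % 12 = (g % 12 + 2) % 12 from by omega, hk] at i3
         rw [hk] at i1
         rw [show (g + 3) % 12 = (g % 12 + 3) % 12 from by omega, hk]
         norm_num [tab] at i1 i2 i3 ⊢
         omega)
  constructor
  · intro g hg
    have q1 := (key g hg).1
    have q2 := (key (g + 12) (by omega)).1
    rw [show (g + 12) % 12 = g % 12 from by omega] at q2
    rw [q1, q2]
  · intro g hg
    have q1 := (key g hg).1
    have h12 : g % 12 = 0 ∨ g % 12 = 1 ∨ g % 12 = 2 ∨ g % 12 = 3 ∨ g % 12 = 4 ∨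
        g % 12 = 5 ∨ g % 12 = 6 ∨ g % 12 = 7 ∨ g % 12 = 8 ∨ g % 12 = 9 ∨
        g % 12 = 10 ∨ g % 12 = 11 := by omega
    rcases h12 with hk|hk|hk|hk|hk|hk|hk|hk|hk|hk|hk|hk <;>
      (rw [hk] at q1
       norm_num [tab] at q1
       omega)
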